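/- The abelianization of the group presented on three generators a, b, c with the two relators R_1 = a b⁻¹ a⁻² c² b c and R_2 = a b a⁻¹ c² b a² b c b is an infinite cyclic group, i.e. it is isomorphic to ℤ. -/

import Mathlib

/-!
Abelianizing the relators gives `-a + 3c = 0` and `2a + 4b + 3c = 0`; the 2 × 2 minors of this
relation matrix are `-4, -9, -12`, with gcd 1, so the abelianization is `ℤ`. Concretely,
`a, b, c ↦ 12, -9, 4` kills both relators and sends `g = -a - b + c` to `1`, and conversely
`a = 12 g`, `b = -9 g`, `c = 4 g` follow from the two relations.
-/

open Multiplicative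

theorem nonempty_mulEquiv_multiplicative_int_of_comp_eq_id {A : Type*} [Group A]
    (φ : A →* Multiplicative ℤ) (g : A) (hg : φ g = ofAdd 1)
    (h : (zpowersHom A g).comp φ = MonoidHom.id A) : Nonempty (A ≃* Multiplicative ℤ) :=
  ⟨φ.toMulEquiv (zpowersHom A g) h (MonoidHom.ext_mint (by simp [hg]))⟩

theorem PresentedGroup.lift_comp_of_eq_one_of_mem {α H : Type*} [Group H]
    {rels : Set (FreeGroup α)} (f : PresentedGroup rels →* H) {r : FreeGroup α}
    (hr : r ∈ rels) : FreeGroup.lift (fun i ↦ f (PresentedGroup.of i)) r = 1 := by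
  have : FreeGroup.lift (fun i ↦ f (PresentedGroup.of i)) = f.comp (PresentedGroup.mk rels) :=
    FreeGroup.ext_hom _ _ fun _ ↦ by simp [PresentedGroup.of]
  rw [this, MonoidHom.comp_apply, PresentedGroup.one_of_mem hr, map_one]

namespace V3372

abbrev relators : Set (FreeGroup (Fin 3)) :=
  {FreeGroup.of 0 * (FreeGroup.of 1)⁻¹ * (FreeGroup.of 0) ^ (-2 : ℤ) *
      (FreeGroup.of 2) ^ (2 : ℤ) * FreeGroup.of 1 * FreeGroup.of 2,
    FreeGroup.of 0 * FreeGroup.of 1 * (FreeGroup.of 0)⁻¹ *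
      (FreeGroup.of 2) ^ (2 : ℤ) * FreeGroup.of 1 *
      (FreeGroup.of 0) ^ (2 : ℤ) * FreeGroup.of 1 * FreeGroup.of 2 *
      FreeGroup.of 1}

theorem zpow_eq_of_relators {M : Type*} [CommGroup M] {a b c : M}
    (h₁ : a * b⁻¹ * a ^ (-2 : ℤ) * c ^ (2 : ℤ) * b * c = 1)
    (h₂ : a * b * a⁻¹ * c ^ (2 : ℤ) * b * a ^ (2 : ℤ) * b * c * b = 1) :
    (a⁻¹ * b⁻¹ * c) ^ (12 : ℤ) = a ∧ (a⁻¹ * b⁻¹ * c) ^ (-9 : ℤ) = b ∧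
      (a⁻¹ * b⁻¹ * c) ^ (4 : ℤ) = c := by
  replace h₁ := congrArg Additive.ofMul h₁
  replace h₂ := congrArg Additive.ofMul h₂
  simp only [ofMul_mul, ofMul_inv, ofMul_zpow, ofMul_one] at h₁ h₂
  refine ⟨Additive.ofMul.injective ?_, Additive.ofMul.injective ?_,
    Additive.ofMul.injective ?_⟩ <;> simp only [ofMul_mul, ofMul_inv, ofMul_zpow]
  · linear_combination (norm := module) (7 : ℤ) • h₁ - (3 : ℤ) • h₂
  · linear_combination (norm := module) (-5 : ℤ) • h₁ + (2 : ℤ) • h₂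
  · linear_combination (norm := module) (2 : ℤ) • h₁ - h₂

def degree : Fin 3 → Multiplicative ℤ := ![ofAdd 12, ofAdd (-9), ofAdd 4]

theorem lift_degree_eq_one : ∀ r ∈ relators, FreeGroup.lift degree r = 1 := by
  rintro r (rfl | rfl) <;>
    simp [degree, ← ofAdd_add, ← ofAdd_neg, ← ofAdd_nsmul]

def abelianizedDegree : Abelianization (PresentedGroup relators) →* Multiplicative ℤ :=
  Abelianization.lift (PresentedGroup.toGroup lift_degree_eq_one)

def generator : Abelianization (PresentedGroup relators) :=
  Abelianization.of ((PresentedGroup.of 0)⁻¹ * (PresentedGroup.of 1)⁻¹ * PresentedGroup.of 2)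

theorem abelianizedDegree_generator : abelianizedDegree generator = ofAdd 1 := by
  simp [abelianizedDegree, generator, degree, ← ofAdd_neg, ← ofAdd_add]

theorem zpowersHom_generator_comp_abelianizedDegree :
    (zpowersHom _ generator).comp abelianizedDegree = MonoidHom.id _ := by
  let a i := Abelianization.of (PresentedGroup.of (rels := relators) i)
  have hrel {r} (hr : r ∈ relators) := PresentedGroup.lift_comp_of_eq_one_of_mem Abelianization.of hr
  obtain ⟨ha, hb, hc⟩ := zpow_eq_of_relators (a := a 0) (b := a 1) (c := a 2)
    (by simpa using hrel (Or.inl rfl)) (by simpa using hrel (Or.inr rfl))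
  refine Abelianization.hom_ext _ _ (PresentedGroup.ext fun i ↦ ?_)
  fin_cases i
  · simpa [abelianizedDegree, generator, degree] using ha
  · simpa [abelianizedDegree, generator, degree] using hb
  · simpa [abelianizedDegree, generator, degree] using hc

end V3372

open V3372 in
/-- The abelianization of `⟨a, b, c ∣ a b⁻¹ a⁻² c² b c, a b a⁻¹ c² b a² b c b⟩`
(the fundamental group of the manifold v3372) is infinite cyclic, i.e. isomorphic
to `ℤ`. -/
theorem abelianization_v3372_iso_int :
    Nonempty
      (Abelianization
          (PresentedGroup
            ({FreeGroup.of 0 * (FreeGroup.of 1)⁻¹ * (FreeGroup.of 0) ^ (-2 : ℤ) *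
                (FreeGroup.of 2) ^ (2 : ℤ) * FreeGroup.of 1 * FreeGroup.of 2,
              FreeGroup.of 0 * FreeGroup.of 1 * (FreeGroup.of 0)⁻¹ *
                (FreeGroup.of 2) ^ (2 : ℤ) * FreeGroup.of 1 *
                (FreeGroup.of 0) ^ (2 : ℤ) * FreeGroup.of 1 * FreeGroup.of 2 *
                FreeGroup.of 1} :
              Set (FreeGroup (Fin 3)))) ≃*
        Multiplicative ℤ) :=
  nonempty_mulEquiv_multiplicative_int_of_comp_eq_id abelianizedDegree generator
    abelianizedDegree_generator zpowersHom_generator_comp_abelianizedDegree
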